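/- arXiv:1301.7189 — 4 statements merged into one kernel-verified Lean document; each statement's English description precedes it below -/
import Mathlib

section
/- The number of labeled DAGs on n vertices satisfies the recurrence A_n = sum_{k=1}^{n} (-1)^{k+1} * C(n,k) * 2^{k(n-k)} * A_{n-k}, with A_0 = 1. -/
open Filter Finset

/-- A directed graph (given by its edge relation) is acyclic iff no vertex lies on a
directed cycle, i.e. the transitive closure is irreflexive. -/
def DigraphAcyclic {V : Type*} (g : V → V → Prop) : Prop :=
  ∀ a, ¬ Relation.TransGen g a a

/-- The number of labeled DAGs on `n` vertices. -/
noncomputable def dagCount (n : ℕ) : ℕ :=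
  Nat.card {g : Fin n → Fin n → Bool // DigraphAcyclic fun x y => g x y = true}

/-- The number of connected labeled DAGs on `n` vertices (connected means the
underlying undirected graph is connected). -/
noncomputable def connDagCount (n : ℕ) : ℕ :=
  Nat.card {g : Fin n → Fin n → Bool //
    (DigraphAcyclic fun x y => g x y = true) ∧
    ∀ a b : Fin n, Relation.ReflTransGen (fun x y => g x y = true ∨ g y x = true) a b}


/-!
Every nonempty DAG has a source. Hence, for a DAG `g` with set of sources `S(g) ≠ ∅`,
`∑_{T ⊆ S(g)} (-1)^|T| = 0`, and summing over all DAGs and exchanging the sums gives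
`∑_T (-1)^|T| · #{DAGs in which every vertex of T is a source} = 0`. A DAG in which the
vertices of `T` are sources consists of an arbitrary set of edges from `T` to its complement
together with an arbitrary DAG on the complement, so the count is `2^{k(n-k)} A_{n-k}` for
`|T| = k`. Grouping the subsets by size and isolating `T = ∅` gives the recurrence.
-/

namespace DigraphAcyclic

variable {α β : Type*}

theorem comap {g : β → β → Prop} (h : DigraphAcyclic g) (f : α → β) :
    DigraphAcyclic fun x y => g (f x) (f y) :=
  fun a ha => h (f a) (Relation.TransGen.lift f (fun _ _ => id) a a ha)

theorem comap_equiv_iff {g : β → β → Prop} (e : α ≃ β) :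
    (DigraphAcyclic fun x y => g (e x) (e y)) ↔ DigraphAcyclic g :=
  ⟨fun h => by simpa using h.comap e.symm, fun h => h.comap e⟩

/-- If every edge ends in `p`, then so does every cycle. -/
theorem iff_subtype {g : α → α → Prop} {p : α → Prop} (hp : ∀ x y, g x y → p y) :
    DigraphAcyclic g ↔ DigraphAcyclic fun x y : Subtype p => g x y := by
  refine ⟨fun h => h.comap Subtype.val, fun h a hcycle => ?_⟩
  have hpa : p a := by
    obtain ⟨b, -, hba⟩ := Relation.TransGen.tail'_iff.mp hcycle
    exact hp b a hba
  suffices ∀ b (hb : Relation.TransGen g b a) (hpb : p b),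
      Relation.TransGen (fun x y : Subtype p => g x y) ⟨b, hpb⟩ ⟨a, hpa⟩ from
    h _ (this a hcycle hpa)
  intro b hb
  induction hb using Relation.TransGen.head_induction_on with
  | single hba => exact fun _ => .single hba
  | head hbc _ ih => exact fun _ => .head hbc (ih (hp _ _ hbc))

theorem exists_source [Finite α] [Nonempty α] {g : α → α → Prop} (h : DigraphAcyclic g) :
    ∃ a, ∀ x, ¬ g x a := by
  have : IsTrans α (Relation.TransGen g) := ⟨fun _ _ _ => Relation.TransGen.trans⟩
  have : Std.Irrefl (Relation.TransGen g) := ⟨h⟩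
  obtain ⟨a, -, ha⟩ := (Finite.wellFounded_of_trans_of_irrefl (Relation.TransGen g)).has_min
    Set.univ Set.univ_nonempty
  exact ⟨a, fun x hx => ha x trivial (.single hx)⟩

end DigraphAcyclic

theorem card_digraphAcyclic_eq_dagCount (α : Type*) [Fintype α] :
    Nat.card {g : α → α → Bool // DigraphAcyclic fun x y => g x y = true} =
      dagCount (Fintype.card α) := by
  let e := Fintype.equivFin α
  refine Nat.card_congr <| (e.arrowCongr (e.arrowCongr (.refl Bool))).subtypeEquiv fun g => ?_
  simpa using (DigraphAcyclic.comap_equiv_iff (g := fun x y => g x y = true) e.symm).symm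

theorem dagCount_zero : dagCount 0 = 1 := by
  simp [dagCount, DigraphAcyclic]

section AttachSources

variable {α : Type*} [DecidableEq α] {T : Finset α}

def attachSources (T : Finset α) (a : T → {y // y ∉ T} → Bool)
    (b : {y // y ∉ T} → {y // y ∉ T} → Bool) (x y : α) : Bool :=
  if hy : y ∈ T then false else if hx : x ∈ T then a ⟨x, hx⟩ ⟨y, hy⟩ else b ⟨x, hx⟩ ⟨y, hy⟩

variable {a : T → {y // y ∉ T} → Bool} {b : {y // y ∉ T} → {y // y ∉ T} → Bool}

@[simp]
theorem attachSources_of_mem (x : α) {y : α} (hy : y ∈ T) : attachSources T a b x y = false :=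
  dif_pos hy

@[simp]
theorem attachSources_mem_compl (x : T) (y : {y // y ∉ T}) : attachSources T a b x y = a x y := by
  simp [attachSources, y.2, x.2]

@[simp]
theorem attachSources_compl_compl (x y : {y // y ∉ T}) : attachSources T a b x y = b x y := by
  simp [attachSources, y.2, x.2]

end AttachSources

section Sources

variable {α : Type*} [Fintype α]

def sources (g : α → α → Bool) : Finset α := {y | ∀ x, g x y = false}

theorem mem_sources {g : α → α → Bool} {y : α} : y ∈ sources g ↔ ∀ x, g x y = false := by
  simp [sources]

theorem sources_nonempty [Nonempty α] {g : α → α → Bool}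
    (hg : DigraphAcyclic fun x y => g x y = true) : (sources g).Nonempty := by
  obtain ⟨a, ha⟩ := hg.exists_source
  exact ⟨a, mem_sources.2 fun x => by simpa using ha x⟩

theorem notMem_of_subset_sources {g : α → α → Bool} {T : Finset α} (hT : T ⊆ sources g)
    {x y : α} (hxy : g x y = true) : y ∉ T := fun hy => by
  simp [mem_sources.1 (hT hy) x] at hxy

theorem subset_sources_attachSources [DecidableEq α] {T : Finset α}
    {a : T → {y // y ∉ T} → Bool} {b : {y // y ∉ T} → {y // y ∉ T} → Bool} :
    T ⊆ sources (attachSources T a b) :=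
  fun _ hy => mem_sources.2 fun x => attachSources_of_mem x hy

def dagWithSourcesEquiv [DecidableEq α] (T : Finset α) :
    {g : α → α → Bool // (DigraphAcyclic fun x y => g x y = true) ∧ T ⊆ sources g} ≃
      (T → {y // y ∉ T} → Bool) ×
        {h : {y // y ∉ T} → {y // y ∉ T} → Bool // DigraphAcyclic fun x y => h x y = true} where
  toFun g := (fun x y => g.1 x y, ⟨fun x y => g.1 x y,
    (DigraphAcyclic.iff_subtype (p := (· ∉ T)) fun _ _ => notMem_of_subset_sources g.2.2).1
      g.2.1⟩)
  invFun p := ⟨attachSources T p.1 p.2.1,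
    (DigraphAcyclic.iff_subtype (p := (· ∉ T)) fun _ _ =>
      notMem_of_subset_sources subset_sources_attachSources).2 (by simpa using p.2.2),
    subset_sources_attachSources⟩
  left_inv g := by
    ext x y
    by_cases hy : y ∈ T
    · simp [hy, mem_sources.1 (g.2.2 hy) x]
    · by_cases hx : x ∈ T
      · exact attachSources_mem_compl ⟨x, hx⟩ ⟨y, hy⟩
      · exact attachSources_compl_compl ⟨x, hx⟩ ⟨y, hy⟩
  right_inv p := by
    ext x y <;> simp

theorem card_dagWithSources [DecidableEq α] (T : Finset α) :
    Nat.card {g : α → α → Bool // (DigraphAcyclic fun x y => g x y = true) ∧ T ⊆ sources g} =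
      2 ^ (#T * (Fintype.card α - #T)) * dagCount (Fintype.card α - #T) := by
  have hcompl : Fintype.card {y // y ∉ T} = Fintype.card α - #T := by
    simp [Fintype.card_subtype_compl]
  rw [Nat.card_congr (dagWithSourcesEquiv T), Nat.card_prod, card_digraphAcyclic_eq_dagCount,
    Nat.card_eq_fintype_card, Fintype.card_fun, Fintype.card_fun, Fintype.card_bool, hcompl,
    Fintype.card_coe, ← pow_mul, Nat.mul_comm (Fintype.card α - #T)]

theorem sum_neg_one_pow_mul_card_dagWithSources [Nonempty α] :
    ∑ T : Finset α, (-1 : ℤ) ^ #T *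
      Nat.card {g : α → α → Bool // (DigraphAcyclic fun x y => g x y = true) ∧ T ⊆ sources g} =
      0 := by
  classical
  calc _ = ∑ T : Finset α,
        ∑ g ∈ {g : α → α → Bool | (DigraphAcyclic fun x y => g x y = true) ∧ T ⊆ sources g},
          (-1 : ℤ) ^ #T := by
        simp [Nat.card_eq_fintype_card, Fintype.card_subtype, mul_comm]
    _ = ∑ g ∈ {g : α → α → Bool | DigraphAcyclic fun x y => g x y = true},
          ∑ T ∈ (sources g).powerset, (-1 : ℤ) ^ #T :=
        sum_comm' fun T g => by simp [and_comm]
    _ = 0 := sum_eq_zero fun g hg =>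
        sum_powerset_neg_one_pow_card_of_nonempty (sources_nonempty (mem_filter.1 hg).2)

end Sources

theorem sum_range_neg_one_pow_mul_choose_mul_dagCount {n : ℕ} (hn : 1 ≤ n) :
    ∑ k ∈ range (n + 1), (-1 : ℤ) ^ k * n.choose k * 2 ^ (k * (n - k)) * dagCount (n - k) = 0 := by
  have : Nonempty (Fin n) := Fin.pos_iff_nonempty.1 hn
  have h := sum_neg_one_pow_mul_card_dagWithSources (α := Fin n)
  simp only [card_dagWithSources, Fintype.card_fin] at h
  rw [← powerset_univ, sum_powerset_apply_card
    (fun k => (-1 : ℤ) ^ k * ↑(2 ^ (k * (n - k)) * dagCount (n - k))), card_univ,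
    Fintype.card_fin] at h
  rw [← h]
  refine sum_congr rfl fun k _ => ?_
  push_cast
  ring

theorem dagCount_recurrence :
    dagCount 0 = 1 ∧
    ∀ n : ℕ, 1 ≤ n →
      (dagCount n : ℤ) =
        ∑ k ∈ Finset.Icc 1 n,
          (-1 : ℤ) ^ (k + 1) * (n.choose k) * 2 ^ (k * (n - k)) * dagCount (n - k) := by
  refine ⟨dagCount_zero, fun n hn => ?_⟩
  have h := sum_range_neg_one_pow_mul_choose_mul_dagCount hn
  rw [range_eq_Ico, sum_eq_sum_Ico_succ_bot (by omega), Ico_add_one_right_eq_Icc] at h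
  simp only [pow_zero, Nat.choose_zero_right, zero_mul, tsub_zero, Nat.cast_one, one_mul] at h
  rw [eq_neg_of_add_eq_zero_left h, ← sum_neg_distrib]
  exact sum_congr rfl fun k _ => by ring
end

section
/- For every k >= 1, A_{2k} >= k^2 * C(2k-2, k-1) * A_k^2, where A_n is the number of labeled DAGs on n vertices. -/
open Filter Finset

/-!
Gluing a DAG on the first `k` vertices to a DAG on the last `k` vertices, together with an
arbitrary set of edges from the first half to the second, always gives a DAG, and distinct
choices give distinct graphs. Hence `A (2k) ≥ 2 ^ (k²) * A k ^ 2`, which is stronger than the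
claim because `k ^ 2 * C(2k-2, k-1) ≤ 4 ^ (k-1) * 4 ^ (k-1) ≤ 2 ^ (k²)`: the pairs `(w, w')`
and subsets `S` of the paper's construction are only special cross-edge patterns.
-/

section
variable {α β : Type*}

theorem DigraphAcyclic.mono {r s : α → α → Prop} (hrs : r ≤ s) (hs : DigraphAcyclic s) :
    DigraphAcyclic r :=
  fun a h => hs a (Relation.TransGen.mono hrs a a h)

theorem DigraphAcyclic.comap_s7 {r : β → β → Prop} (hr : DigraphAcyclic r) (f : α → β) :
    DigraphAcyclic (Function.onFun r f) :=
  fun a h => hr (f a) (Relation.TransGen.lift f le_rfl a a h)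

-- Edges only lead from the left summand to the right one, so a cycle stays in one summand.
theorem DigraphAcyclic.sumLex {r : α → α → Prop} {s : β → β → Prop} (hr : DigraphAcyclic r)
    (hs : DigraphAcyclic s) : DigraphAcyclic (Sum.Lex r s) := by
  intro a h
  have hle : Sum.Lex r s ≤ Sum.Lex (Relation.TransGen r) (Relation.TransGen s) :=
    fun _ _ => Sum.Lex.mono (fun _ _ => .single) (fun _ _ => .single)
  have := Relation.TransGen.mono hle a a h
  rw [Relation.transGen_eq_self] at this
  cases a with
  | inl a => exact hr a (Sum.lex_inl_inl.mp this)
  | inr b => exact hs b (Sum.lex_inr_inr.mp this)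

abbrev Dag (V : Type*) := {g : V → V → Bool // DigraphAcyclic fun x y => g x y = true}

def sumGlue (m : α → β → Bool) (g : α → α → Bool) (g' : β → β → Bool) :
    α ⊕ β → α ⊕ β → Bool
  | .inl a, .inl a' => g a a'
  | .inl a, .inr b => m a b
  | .inr _, .inl _ => false
  | .inr b, .inr b' => g' b b'

theorem sumGlue_acyclic (m : α → β → Bool) {g : α → α → Bool} {g' : β → β → Bool}
    (hg : DigraphAcyclic fun x y => g x y = true) (hg' : DigraphAcyclic fun x y => g' x y = true) :
    DigraphAcyclic fun x y => sumGlue m g g' x y = true := by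
  refine (hg.sumLex hg').mono ?_
  rintro (a | b) (a' | b') h <;> simp_all [sumGlue]

theorem sumGlue_injective :
    Function.Injective fun p : (α → β → Bool) × (α → α → Bool) × (β → β → Bool) =>
      sumGlue p.1 p.2.1 p.2.2 := by
  rintro ⟨m₁, g₁, g₁'⟩ ⟨m₂, g₂, g₂'⟩ h
  have h' := fun x y => congrFun (congrFun h x) y
  simp only [Prod.mk.injEq]
  refine ⟨?_, ?_, ?_⟩ <;> funext x y
  exacts [h' (.inl x) (.inr y), h' (.inl x) (.inl y), h' (.inr x) (.inr y)]

theorem two_pow_mul_card_dag_mul_le [Finite α] [Finite β] :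
    2 ^ (Nat.card α * Nat.card β) * Nat.card (Dag α) * Nat.card (Dag β) ≤
      Nat.card (Dag (α ⊕ β)) := by
  let glue : (α → β → Bool) × Dag α × Dag β → Dag (α ⊕ β) :=
    fun p => ⟨sumGlue p.1 p.2.1 p.2.2, sumGlue_acyclic p.1 p.2.1.2 p.2.2.2⟩
  have hglue : Function.Injective glue := by
    rintro ⟨m₁, g₁, g₁'⟩ ⟨m₂, g₂, g₂'⟩ h
    have := @sumGlue_injective α β (m₁, g₁.1, g₁'.1) (m₂, g₂.1, g₂'.1) (congrArg Subtype.val h)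
    simp_all [Subtype.ext_iff]
  have := Nat.card_le_card_of_injective glue hglue
  simpa [Nat.card_prod, Nat.card_fun, mul_assoc, ← pow_mul, mul_comm (Nat.card β)] using this

theorem Dag.card_congr (e : α ≃ β) : Nat.card (Dag α) = Nat.card (Dag β) := by
  refine Nat.card_congr (Equiv.subtypeEquiv (e.arrowCongr (e.arrowCongr (.refl Bool))) ?_)
  refine fun g => ⟨fun h => h.comap_s7 e.symm, fun h => ?_⟩
  convert h.comap_s7 e using 1
  funext x y
  simp [Function.onFun]

end

theorem sq_mul_choose_le_two_pow (k : ℕ) : k ^ 2 * (2 * k - 2).choose (k - 1) ≤ 2 ^ (k * k) := by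
  have hk : k ≤ 2 ^ (k - 1) := by have := Nat.lt_two_pow_self (n := k - 1); omega
  have hexp : 2 * (k - 1) + (2 * k - 2) ≤ k * k := by
    rcases k with _ | j
    · simp
    · have : 4 * j ≤ (j + 1) * (j + 1) := by nlinarith [sq_nonneg ((j : ℤ) - 1)]
      omega
  calc k ^ 2 * (2 * k - 2).choose (k - 1) ≤ (2 ^ (k - 1)) ^ 2 * 2 ^ (2 * k - 2) := by
        gcongr; exact Nat.choose_le_two_pow _ _
    _ = 2 ^ (2 * (k - 1) + (2 * k - 2)) := by ring
    _ ≤ 2 ^ (k * k) := Nat.pow_le_pow_right (by norm_num) hexp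

theorem dagCount_two_mul_ge_general (k : ℕ) :
    k ^ 2 * (2 * k - 2).choose (k - 1) * dagCount k ^ 2 ≤ dagCount (2 * k) := by
  calc k ^ 2 * (2 * k - 2).choose (k - 1) * dagCount k ^ 2
      ≤ 2 ^ (k * k) * dagCount k * dagCount k := by
        rw [sq (dagCount k), ← mul_assoc]
        gcongr
        exact sq_mul_choose_le_two_pow k
    _ ≤ Nat.card (Dag (Fin k ⊕ Fin k)) := by
        have := two_pow_mul_card_dag_mul_le (α := Fin k) (β := Fin k)
        rwa [Nat.card_fin] at this
    _ = dagCount (2 * k) :=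
        Dag.card_congr (finSumFinEquiv.trans (finCongr (two_mul k).symm))

theorem dagCount_two_mul_ge (k : ℕ) (hk : 1 ≤ k) :
    k ^ 2 * (2 * k - 2).choose (k - 1) * dagCount k ^ 2 ≤ dagCount (2 * k) :=
  dagCount_two_mul_ge_general k
end

section
/- The series sum_{k=1}^infty (A_k/k!)^2 / (A_{2k}/(2k)!) converges, where A_n is the number of labeled DAGs on n vertices. -/
open Filter Finset

open scoped Nat

/-!
Placing two DAGs on `k` vertices side by side and adding any set of edges from the first to
the second yields a DAG on `2k` vertices, and distinct choices give distinct DAGs; hence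
`A_k² 2^{k²} ≤ A_{2k}`. Since `(2k)! = C(2k,k) (k!)²`, the `k`-th term is
`C(2k,k) A_k² / A_{2k} ≤ 4^k / 2^{k²}`, which is summable.
-/

open Relation

abbrev AcyclicDigraph (V : Type*) :=
  {g : V → V → Bool // DigraphAcyclic fun x y => g x y = true}

section Acyclic

variable {V W : Type*}

lemma DigraphAcyclic.comap_s8 {r : V → V → Prop} (h : DigraphAcyclic r) (f : W → V) :
    DigraphAcyclic fun x y => r (f x) (f y) :=
  fun a ha => h (f a) (TransGen.lift f (fun _ _ hxy => hxy) _ _ ha)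

lemma digraphAcyclic_bot : DigraphAcyclic fun _ _ : V => False :=
  fun _ h => by cases h <;> contradiction

instance : Nonempty (AcyclicDigraph V) :=
  ⟨⟨fun _ _ => false, by simpa using digraphAcyclic_bot⟩⟩

def AcyclicDigraph.congr (e : V ≃ W) : AcyclicDigraph V ≃ AcyclicDigraph W :=
  (e.arrowCongr (e.arrowCongr (.refl Bool))).subtypeEquiv fun g =>
    ⟨fun h => h.comap_s8 e.symm, fun h => by simpa using h.comap_s8 e⟩

end Acyclic

section Glue

variable {α β : Type*}

def glueDigraph (g₁ : α → α → Bool) (g₂ : β → β → Bool) (X : α → β → Bool) :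
    α ⊕ β → α ⊕ β → Bool
  | .inl a, .inl a' => g₁ a a'
  | .inl a, .inr b => X a b
  | .inr _, .inl _ => false
  | .inr b, .inr b' => g₂ b b'

lemma glueDigraph_inj {g₁ g₁' : α → α → Bool} {g₂ g₂' : β → β → Bool} {X X' : α → β → Bool}
    (h : glueDigraph g₁ g₂ X = glueDigraph g₁' g₂' X') : g₁ = g₁' ∧ g₂ = g₂' ∧ X = X' := by
  have h' (u v) : glueDigraph g₁ g₂ X u v = glueDigraph g₁' g₂' X' u v := by rw [h]
  exact ⟨funext₂ fun a a' => h' (.inl a) (.inl a'), funext₂ fun b b' => h' (.inr b) (.inr b'),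
    funext₂ fun a b => h' (.inl a) (.inr b)⟩

-- No edge leads back from `β` to `α`, so paths are dominated by the lexicographic sum of the two
-- transitive closures.
lemma digraphAcyclic_glueDigraph {g₁ : α → α → Bool} {g₂ : β → β → Bool}
    (h₁ : DigraphAcyclic fun x y => g₁ x y = true) (h₂ : DigraphAcyclic fun x y => g₂ x y = true)
    (X : α → β → Bool) :
    DigraphAcyclic fun x y => glueDigraph g₁ g₂ X x y = true := by
  have hle : (fun x y => glueDigraph g₁ g₂ X x y = true) ≤
      Sum.Lex (TransGen fun x y => g₁ x y = true) (TransGen fun x y => g₂ x y = true) := by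
    rintro (a | b) (a' | b') h
    · exact .inl (.single h)
    · exact .sep a b'
    · exact absurd h Bool.false_ne_true
    · exact .inr (.single h)
  intro u hu
  cases transGen_minimal hle u u hu with
  | inl h => exact h₁ _ h
  | inr h => exact h₂ _ h

lemma card_acyclicDigraph_mul_le [Finite α] [Finite β] :
    Nat.card (AcyclicDigraph α) * Nat.card (AcyclicDigraph β) * 2 ^ (Nat.card α * Nat.card β) ≤
      Nat.card (AcyclicDigraph (α ⊕ β)) := by
  let glue : AcyclicDigraph α × AcyclicDigraph β × (α → β → Bool) → AcyclicDigraph (α ⊕ β) :=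
    fun t => ⟨glueDigraph t.1.1 t.2.1.1 t.2.2, digraphAcyclic_glueDigraph t.1.2 t.2.1.2 t.2.2⟩
  have hglue : Function.Injective glue := fun s t hst => by
    obtain ⟨h₁, h₂, hX⟩ := glueDigraph_inj (congrArg Subtype.val hst)
    exact Prod.ext (Subtype.ext h₁) (Prod.ext (Subtype.ext h₂) hX)
  have hcross : Nat.card (α → β → Bool) = 2 ^ (Nat.card α * Nat.card β) := by
    simp [Nat.card_fun, pow_mul']
  calc _ = Nat.card (AcyclicDigraph α × AcyclicDigraph β × (α → β → Bool)) := by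
        rw [Nat.card_prod, Nat.card_prod, hcross, mul_assoc]
    _ ≤ _ := Nat.card_le_card_of_injective glue hglue

end Glue

lemma dagCount_pos (n : ℕ) : 0 < dagCount n :=
  Nat.card_pos (α := AcyclicDigraph (Fin n))

lemma dagCount_sq_mul_le (k : ℕ) : dagCount k ^ 2 * 2 ^ (k * k) ≤ dagCount (2 * k) := by
  have h := card_acyclicDigraph_mul_le (α := Fin k) (β := Fin k)
  rwa [Nat.card_congr (AcyclicDigraph.congr (finSumFinEquiv.trans (finCongr (two_mul k).symm))),
    Nat.card_fin, ← sq] at h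

lemma factorial_two_mul_eq (k : ℕ) : (2 * k)! = k.centralBinom * k ! ^ 2 := by
  rw [Nat.centralBinom_eq_two_mul_choose, sq, ← mul_assoc]
  simpa [two_mul] using (Nat.choose_mul_factorial_mul_factorial (Nat.le_add_left k k)).symm

lemma dagCount_ratio_le (k : ℕ) :
    ((dagCount k : ℝ) / k !) ^ 2 / ((dagCount (2 * k) : ℝ) / (2 * k)!) ≤ 4 ^ k / 2 ^ (k * k) := by
  have hA : (0 : ℝ) < dagCount (2 * k) := mod_cast dagCount_pos _
  have hglue : (dagCount k : ℝ) ^ 2 * 2 ^ (k * k) ≤ dagCount (2 * k) := mod_cast dagCount_sq_mul_le k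
  calc _ = (k.centralBinom : ℝ) * ((dagCount k : ℝ) ^ 2 / dagCount (2 * k)) := by
        rw [factorial_two_mul_eq]; push_cast; field_simp
    _ ≤ 4 ^ k * (1 / 2 ^ (k * k)) := by
        gcongr ?_ * ?_
        · exact_mod_cast Nat.centralBinom_le_four_pow k
        · rw [div_le_div_iff₀ hA (by positivity)]; linarith
    _ = 4 ^ k / 2 ^ (k * k) := by ring

lemma summable_four_pow_div_two_pow_sq : Summable fun k : ℕ => (4 : ℝ) ^ k / 2 ^ (k * k) := by
  have hle (k : ℕ) : (4 : ℝ) ^ k / 2 ^ (k * k) ≤ 4 * (1 / 2) ^ k := by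
    have hexp : 3 * k ≤ k * k + 2 := by
      rcases Nat.lt_or_ge k 2 with hk | hk
      · interval_cases k <;> norm_num
      · nlinarith
    calc (4 : ℝ) ^ k / 2 ^ (k * k) = 2 ^ (3 * k) / (2 ^ k * 2 ^ (k * k)) := by
          rw [pow_mul (2 : ℝ) 3, show (2 : ℝ) ^ 3 = 4 * 2 by norm_num, mul_pow]; field_simp
      _ ≤ 2 ^ (k * k + 2) / (2 ^ k * 2 ^ (k * k)) := by gcongr; exact one_le_two
      _ = 4 * (1 / 2) ^ k := by
          rw [pow_add, one_div_pow]; field_simp; norm_num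
  exact .of_nonneg_of_le (fun _ => by positivity) hle
    ((summable_geometric_of_lt_one (by norm_num) (by norm_num)).mul_left 4)

theorem summable_dag_ratio_series :
    Summable fun k : ℕ =>
      ((dagCount (k + 1) : ℝ) / (k + 1).factorial) ^ 2 /
        ((dagCount (2 * (k + 1)) : ℝ) / (2 * (k + 1)).factorial) :=
  .of_nonneg_of_le (fun _ => by positivity) (fun k => dagCount_ratio_le (k + 1))
    ((summable_nat_add_iff 1).mpr summable_four_pow_div_two_pow_sq)
end

section
/- The ratio of the number of labeled connected (undirected) graphs on n vertices to the number of all labeled graphs on n vertices tends to 1 as n tends to infinity. -/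
open Filter Finset

/-! A disconnected graph on `n` vertices has no edge across some cut `(S, Sᶜ)` with
`0 < |S| ≤ n / 2`. The cut has `|S| (n - |S|) ≥ |S| ⌊n / 2⌋` potential edges, so at most a
fraction `y ^ |S|` of all graphs avoid it, where `y = 2 ^ (-⌊n / 2⌋)`. Summing over all cuts,
the fraction of disconnected graphs is at most `(1 + y) ^ n - 1 ≤ exp (n y) - 1 → 0`. -/

section BooleanAlgebra

variable {α : Type*} [BooleanAlgebra α]

def equivIicProdIicCompl (a : α) : α ≃ Set.Iic a × Set.Iic aᶜ where
  toFun x := (⟨x ⊓ a, inf_le_right⟩, ⟨x ⊓ aᶜ, inf_le_right⟩)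
  invFun p := p.1 ⊔ p.2
  left_inv _ := sup_inf_inf_compl
  right_inv := by
    rintro ⟨⟨y, hy : y ≤ a⟩, ⟨z, hz : z ≤ aᶜ⟩⟩
    have hza : z ⊓ a = ⊥ := disjoint_iff.1 (le_compl_iff_disjoint_right.1 hz)
    have hyc : y ⊓ aᶜ = ⊥ :=
      disjoint_iff.1 (le_compl_iff_disjoint_right.1 (le_compl_compl.trans' hy))
    ext <;> simp [inf_sup_right, inf_eq_left.2 hy, inf_eq_left.2 hz, hza, hyc]

theorem Nat.card_Iic_mul_card_Iic_compl (a : α) :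
    Nat.card (Set.Iic a) * Nat.card (Set.Iic aᶜ) = Nat.card α := by
  rw [← Nat.card_prod, Nat.card_congr (equivIicProdIicCompl a)]

end BooleanAlgebra

theorem Nat.card_set (X : Type*) [Finite X] : Nat.card (Set X) = 2 ^ Nat.card X := by
  have := Fintype.ofFinite X
  classical
  simp [Nat.card_eq_fintype_card, Fintype.card_set]

namespace SimpleGraph

variable {V : Type*}

theorem two_pow_card_edgeSet_le_card_Iic [Finite V] (K : SimpleGraph V) :
    2 ^ Nat.card K.edgeSet ≤ Nat.card (Set.Iic K) := by
  rw [← Nat.card_set]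
  refine Nat.card_le_card_of_injective
    (fun T => ⟨fromEdgeSet (Subtype.val '' T), fun a b h => ?_⟩) fun T T' h => ?_
  · exact ((fromEdgeSet_le _).2 (Set.sdiff_subset.trans (by simp))) h
  · have hdiag (T : Set K.edgeSet) : Subtype.val '' T \ Sym2.diagSet = Subtype.val '' T :=
      sdiff_eq_self_iff_disjoint.2 <| Set.disjoint_right.2 fun _ ⟨e, _, he⟩ =>
        he ▸ K.not_isDiag_of_mem_edgeSet e.2
    have := congrArg (fun H : Set.Iic K => H.1.edgeSet) h
    simpa [hdiag] using this

def cutGraph (S : Set V) : SimpleGraph V where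
  Adj a b := Xor (a ∈ S) (b ∈ S)
  symm := ⟨fun _ _ => by simp [xor_comm]⟩

@[simp]
theorem cutGraph_adj {S : Set V} {a b : V} : (cutGraph S).Adj a b ↔ Xor (a ∈ S) (b ∈ S) :=
  Iff.rfl

theorem cutGraph_compl (S : Set V) : cutGraph Sᶜ = cutGraph S := by
  ext; simp only [cutGraph_adj, Set.mem_compl_iff, xor_not_not]

theorem card_mul_card_compl_le_card_edgeSet_cutGraph [Finite V] (S : Set V) :
    Nat.card S * Nat.card ↥Sᶜ ≤ Nat.card (cutGraph S).edgeSet := by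
  rw [← Nat.card_prod]
  refine Nat.card_le_card_of_injective (fun p => ⟨s(p.1, p.2), ?_⟩) ?_
  · exact Or.inl ⟨p.1.2, p.2.2⟩
  · rintro ⟨⟨a, ha⟩, ⟨b, hb⟩⟩ ⟨⟨a', ha'⟩, ⟨b', hb'⟩⟩ h
    rcases Sym2.eq_iff.1 (congrArg Subtype.val h) with ⟨rfl, rfl⟩ | ⟨rfl, rfl⟩
    · rfl
    · exact absurd ha hb'

theorem le_compl_cutGraph_supp {G : SimpleGraph V} (C : G.ConnectedComponent) :
    G ≤ (cutGraph C.supp)ᶜ := by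
  intro a b h
  have : G.connectedComponentMk a = G.connectedComponentMk b := ConnectedComponent.eq.2 h.reachable
  simp [h.ne, ConnectedComponent.mem_supp_iff, this]

theorem exists_cutGraph_of_not_connected [Fintype V] [Nonempty V] {G : SimpleGraph V}
    (hG : ¬G.Connected) :
    ∃ S : Finset V, S.Nonempty ∧ 2 * #S ≤ Fintype.card V ∧ G ≤ (cutGraph S)ᶜ := by
  classical
  obtain ⟨u, w, huw⟩ : ∃ u w, ¬G.Reachable u w := by
    simpa [connected_iff, Preconnected] using hG
  set S := (G.connectedComponentMk u).supp.toFinset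
  have hS : G ≤ (cutGraph S)ᶜ := by
    simpa [S] using le_compl_cutGraph_supp (G.connectedComponentMk u)
  have hwS : w ∉ S := by simpa [S, ConnectedComponent.eq] using fun h => huw h.symm
  by_cases h : 2 * #S ≤ Fintype.card V
  · exact ⟨S, ⟨u, by simp [S]⟩, h, hS⟩
  · refine ⟨Sᶜ, ⟨w, by simpa using hwS⟩, ?_, by rwa [coe_compl, cutGraph_compl]⟩
    rw [card_compl]
    omega

theorem card_Iic_compl_cutGraph_mul_le [Fintype V] (S : Finset V) :
    Nat.card (Set.Iic (cutGraph (S : Set V))ᶜ) * 2 ^ (#S * (Fintype.card V - #S)) ≤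
      Nat.card (SimpleGraph V) := by
  classical
  rw [← Nat.card_Iic_mul_card_Iic_compl (cutGraph (S : Set V)), mul_comm]
  gcongr
  refine le_trans (Nat.pow_le_pow_right two_pos ?_) (two_pow_card_edgeSet_le_card_Iic _)
  have := card_mul_card_compl_le_card_edgeSet_cutGraph (S : Set V)
  rwa [← coe_compl, Nat.card_coe_set_eq, Nat.card_coe_set_eq, Set.ncard_coe_finset,
    Set.ncard_coe_finset, card_compl] at this

theorem card_Iic_compl_cutGraph_le [Fintype V] {S : Finset V} (hS : 2 * #S ≤ Fintype.card V) :
    (Nat.card (Set.Iic (cutGraph (S : Set V))ᶜ) : ℝ) ≤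
      Nat.card (SimpleGraph V) * ((1 / 2) ^ (Fintype.card V / 2)) ^ #S := by
  have hexp : Fintype.card V / 2 * #S ≤ #S * (Fintype.card V - #S) := by
    rw [mul_comm]; gcongr; omega
  calc (Nat.card (Set.Iic (cutGraph (S : Set V))ᶜ) : ℝ)
      ≤ Nat.card (SimpleGraph V) / 2 ^ (#S * (Fintype.card V - #S)) := by
        rw [le_div_iff₀ (by positivity)]
        exact_mod_cast card_Iic_compl_cutGraph_mul_le S
    _ ≤ Nat.card (SimpleGraph V) * ((1 / 2) ^ (Fintype.card V / 2)) ^ #S := by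
        rw [div_eq_mul_inv, ← inv_pow, ← pow_mul, inv_eq_one_div]
        exact mul_le_mul_of_nonneg_left (pow_le_pow_of_le_one (by norm_num) (by norm_num) hexp)
          (by positivity)

theorem card_not_connected_le [Fintype V] [Nonempty V] :
    (Nat.card {G : SimpleGraph V // ¬G.Connected} : ℝ) ≤
      Nat.card (SimpleGraph V) * ((1 + (1 / 2) ^ (Fintype.card V / 2)) ^ Fintype.card V - 1) := by
  classical
  set y : ℝ := (1 / 2) ^ (Fintype.card V / 2)
  set 𝒮 : Finset (Finset V) := {S | S.Nonempty ∧ 2 * #S ≤ Fintype.card V}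
  have hunion : Nat.card {G : SimpleGraph V // ¬G.Connected} ≤
      ∑ S ∈ 𝒮, Nat.card (Set.Iic (cutGraph (S : Set V))ᶜ) := by
    simp only [Nat.card_eq_fintype_card, Fintype.card_subtype, Set.mem_Iic]
    refine (card_le_card fun G hG => ?_).trans card_biUnion_le
    obtain ⟨S, hS, hSn, hGS⟩ := exists_cutGraph_of_not_connected (mem_filter.1 hG).2
    exact mem_biUnion.2 ⟨S, by simp [𝒮, hS, hSn], by simpa using hGS⟩
  have hsum : ∑ S ∈ 𝒮, y ^ #S ≤ (1 + y) ^ Fintype.card V - 1 := by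
    calc ∑ S ∈ 𝒮, y ^ #S ≤ ∑ S ∈ univ.erase ∅, y ^ #S :=
          sum_le_sum_of_subset_of_nonneg (fun S hS => by simp_all [𝒮, nonempty_iff_ne_empty])
            fun _ _ _ => by positivity
      _ = (1 + y) ^ Fintype.card V - 1 := by
          rw [sum_erase_eq_sub (mem_univ _), add_comm, ← Fintype.sum_pow_mul_eq_add_pow]
          simp
  calc (Nat.card {G : SimpleGraph V // ¬G.Connected} : ℝ)
      ≤ ∑ S ∈ 𝒮, (Nat.card (Set.Iic (cutGraph (S : Set V))ᶜ) : ℝ) := mod_cast hunion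
    _ ≤ ∑ S ∈ 𝒮, Nat.card (SimpleGraph V) * y ^ #S :=
        sum_le_sum fun S hS => card_Iic_compl_cutGraph_le (mem_filter.1 hS).2.2
    _ ≤ Nat.card (SimpleGraph V) * ((1 + y) ^ Fintype.card V - 1) := by
        rw [← mul_sum]; gcongr

end SimpleGraph

theorem tendsto_one_add_pow_sub_one {y : ℕ → ℝ} (hy : ∀ n, 0 ≤ y n)
    (h : Tendsto (fun n => n * y n) atTop (nhds 0)) :
    Tendsto (fun n => (1 + y n) ^ n - 1) atTop (nhds 0) := by
  have hexp : Tendsto (fun n => Real.exp (n * y n) - 1) atTop (nhds 0) := by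
    simpa using ((Real.continuous_exp.tendsto 0).comp h).sub_const 1
  refine squeeze_zero (fun n => sub_nonneg.2 (one_le_pow₀ (by linarith [hy n])))
    (fun n => sub_le_sub_right ?_ 1) hexp
  calc (1 + y n) ^ n ≤ Real.exp (y n) ^ n := by
        gcongr
        · linarith [hy n]
        · linarith [Real.add_one_le_exp (y n)]
    _ = Real.exp (n * y n) := (Real.exp_nat_mul _ _).symm

theorem tendsto_mul_half_pow_div_two :
    Tendsto (fun n : ℕ => n * (1 / 2 : ℝ) ^ (n / 2)) atTop (nhds 0) := by
  have hm : Tendsto (fun m : ℕ => (2 * m + 1) * (1 / 2 : ℝ) ^ m) atTop (nhds 0) := by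
    have h1 := tendsto_pow_const_mul_const_pow_of_lt_one 1 (r := 1 / 2) (by norm_num) (by norm_num)
    have h2 := tendsto_pow_atTop_nhds_zero_of_lt_one (r := (1 / 2 : ℝ)) (by norm_num)
      (by norm_num)
    simpa [add_mul, mul_assoc] using (h1.const_mul 2).add h2
  refine squeeze_zero (fun n => by positivity) (fun n => ?_)
    (hm.comp (Nat.tendsto_div_const_atTop two_ne_zero))
  have : (n : ℝ) ≤ 2 * (n / 2 : ℕ) + 1 := by exact_mod_cast (by omega : n ≤ 2 * (n / 2) + 1)
  exact mul_le_mul_of_nonneg_right this (by positivity)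

theorem Nat.card_subtype_div_card_eq_one_sub {α : Type*} [Finite α] [Nonempty α]
    (p : α → Prop) :
    (Nat.card {x // p x} : ℝ) / Nat.card α = 1 - Nat.card {x // ¬p x} / Nat.card α := by
  classical
  have hpos : (0 : ℝ) < Nat.card α := by exact_mod_cast Nat.card_pos
  rw [eq_sub_iff_add_eq, ← add_div, div_eq_one_iff_eq hpos.ne', ← Nat.cast_add,
    ← Nat.card_sum, Nat.card_congr (Equiv.sumCompl p)]

theorem connected_graphs_ratio_tendsto_one :
    Tendsto (fun n : ℕ =>
        (Nat.card {G : SimpleGraph (Fin n) // G.Connected} : ℝ) /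
          (Nat.card (SimpleGraph (Fin n)) : ℝ)) atTop (nhds 1) := by
  have hdisc : Tendsto (fun n : ℕ => (Nat.card {G : SimpleGraph (Fin n) // ¬G.Connected} : ℝ) /
      Nat.card (SimpleGraph (Fin n))) atTop (nhds 0) := by
    refine squeeze_zero' (Eventually.of_forall fun n => by positivity) ?_
      (tendsto_one_add_pow_sub_one (fun n => by positivity) tendsto_mul_half_pow_div_two)
    filter_upwards [eventually_gt_atTop 0] with n hn
    have : Nonempty (Fin n) := Fin.pos_iff_nonempty.1 hn
    rw [div_le_iff₀ (by exact_mod_cast Nat.card_pos), mul_comm]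
    simpa using SimpleGraph.card_not_connected_le (V := Fin n)
  exact (sub_zero (1 : ℝ) ▸ hdisc.const_sub 1).congr fun n =>
    (Nat.card_subtype_div_card_eq_one_sub _).symm
end
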